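/- Let f : ℝ^n → ℝ be the log-sum-exp function f(x) = log(Σ_{i=1}^n exp(x_i)). Then its convex (Fenchel) conjugate satisfies: for u ∈ ℝ^n with u_i ≥ 0 for all i and Σ_i u_i = 1, sup_{x ∈ ℝ^n} (⟨u, x⟩ − f(x)) = Σ_i u_i·log(u_i) (with the convention 0·log 0 = 0); and for any other u ∈ ℝ^n (i.e., with some u_i < 0 or Σ_i u_i ≠ 1), sup_{x ∈ ℝ^n} (⟨u, x⟩ − f(x)) = +∞. -/

import Mathlib

/-!
On the simplex, Jensen's inequality for `exp` with weights `u` gives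
`exp (∑ u_i (x_i - log u_i)) ≤ ∑ exp x_i`, i.e. `⟨u, x⟩ - f x ≤ ∑ u_i log u_i`; equality is
approached by `x_i = log u_i` on the support of `u` and `x_i → -∞` off it. Off the simplex the
objective is unbounded: along constant vectors `x = c·𝟙` it equals `(∑ u_i - 1) c - log n`, and
along `x = c e_j` with `c → -∞` it is at least `u_j c - log n`, which blows up when `u_j < 0`.
-/

open Finset Real Filter Topology

noncomputable section

namespace LogSumExp

variable {ι : Type*} [Fintype ι]

def logSumExp (x : ι → ℝ) : ℝ := log (∑ i, exp (x i))

theorem logSumExp_const [Nonempty ι] (c : ℝ) :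
    logSumExp (fun _ : ι => c) = log (Fintype.card ι) + c := by
  rw [logSumExp, sum_const, card_univ, nsmul_eq_mul,
    log_mul (by exact_mod_cast Fintype.card_ne_zero) (exp_pos c).ne', log_exp]

theorem logSumExp_le_log_card_of_nonpos [Nonempty ι] {x : ι → ℝ} (hx : ∀ i, x i ≤ 0) :
    logSumExp x ≤ log (Fintype.card ι) := by
  refine log_le_log (sum_pos (fun i _ => exp_pos _) univ_nonempty) ?_
  calc ∑ i, exp (x i) ≤ ∑ _ : ι, (1 : ℝ) := sum_le_sum fun i _ => exp_le_one_iff.2 (hx i)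
    _ = Fintype.card ι := by simp

theorem sum_mul_sub_logSumExp_le {u : ι → ℝ} (hu : u ∈ stdSimplex ℝ ι) (x : ι → ℝ) :
    ∑ i, u i * x i - logSumExp x ≤ ∑ i, u i * log (u i) := by
  have jensen : exp (∑ i, u i * (x i - log (u i))) ≤ ∑ i, exp (x i) := by
    refine (convexOn_exp.map_sum_le (fun i _ => hu.1 i) hu.2 fun i _ => trivial).trans
      (sum_le_sum fun i _ => ?_)
    rcases (hu.1 i).eq_or_lt with h | h
    · simpa [← h] using (exp_pos (x i)).le
    · rw [smul_eq_mul, exp_sub, exp_log h, mul_div_cancel₀ _ h.ne']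
  have hlog := log_le_log (exp_pos _) jensen
  rw [log_exp, ← logSumExp] at hlog
  simp only [mul_sub, sum_sub_distrib] at hlog
  linarith

def approxMaximizer (u : ι → ℝ) (t : ℝ) (i : ι) : ℝ := if u i = 0 then t else log (u i)

theorem sum_mul_approxMaximizer (u : ι → ℝ) (t : ℝ) :
    ∑ i, u i * approxMaximizer u t i = ∑ i, u i * log (u i) :=
  sum_congr rfl fun i _ => by by_cases h : u i = 0 <;> simp [approxMaximizer, h]

theorem tendsto_logSumExp_approxMaximizer {u : ι → ℝ} (hu : u ∈ stdSimplex ℝ ι) :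
    Tendsto (fun t => logSumExp (approxMaximizer u t)) atBot (𝓝 0) := by
  have hexp : ∀ i, Tendsto (fun t => exp (approxMaximizer u t i)) atBot (𝓝 (u i)) := by
    intro i
    by_cases h : u i = 0
    · simpa [approxMaximizer, h] using tendsto_exp_atBot
    · simp only [approxMaximizer, h, if_false, exp_log ((hu.1 i).lt_of_ne' h)]
      exact tendsto_const_nhds
  have hsum := tendsto_finsetSum univ fun i _ => hexp i
  rw [hu.2] at hsum
  simpa [logSumExp] using hsum.log one_ne_zero

theorem tendsto_sum_mul_sub_logSumExp_approxMaximizer {u : ι → ℝ} (hu : u ∈ stdSimplex ℝ ι) :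
    Tendsto (fun t => ∑ i, u i * approxMaximizer u t i - logSumExp (approxMaximizer u t)) atBot
      (𝓝 (∑ i, u i * log (u i))) := by
  simpa [sum_mul_approxMaximizer] using
    (tendsto_logSumExp_approxMaximizer hu).const_sub (∑ i, u i * log (u i))

theorem exists_lt_sum_mul_sub_logSumExp_of_sum_ne_one [Nonempty ι] {u : ι → ℝ}
    (hu : ∑ i, u i ≠ 1) (r : ℝ) : ∃ x : ι → ℝ, r < ∑ i, u i * x i - logSumExp x := by
  set c := (r + log (Fintype.card ι) + 1) / (∑ i, u i - 1)
  refine ⟨fun _ => c, ?_⟩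
  have hc : (∑ i, u i - 1) * c = r + log (Fintype.card ι) + 1 :=
    mul_div_cancel₀ _ (sub_ne_zero.2 hu)
  rw [logSumExp_const, ← sum_mul]
  linarith

theorem exists_lt_sum_mul_sub_logSumExp_of_neg [DecidableEq ι] {u : ι → ℝ} {j : ι}
    (hj : u j < 0) (r : ℝ) : ∃ x : ι → ℝ, r < ∑ i, u i * x i - logSumExp x := by
  have : Nonempty ι := ⟨j⟩
  set c := min 0 ((r + log (Fintype.card ι) + 1) / u j)
  refine ⟨(Pi.single j c : ι → ℝ), ?_⟩
  have hx : ∀ i, (Pi.single j c : ι → ℝ) i ≤ 0 := fun i => by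
    by_cases h : i = j
    · subst h; simp [c]
    · simp [h]
  have hc : r + log (Fintype.card ι) + 1 ≤ u j * c := by
    calc r + log (Fintype.card ι) + 1 = u j * ((r + log (Fintype.card ι) + 1) / u j) :=
          (mul_div_cancel₀ _ hj.ne).symm
      _ ≤ u j * c := mul_le_mul_of_nonpos_left (min_le_right _ _) hj.le
  have hdot : ∑ i, u i * (Pi.single j c : ι → ℝ) i = u j * c := dotProduct_single u c j
  linarith [logSumExp_le_log_card_of_nonpos hx]

theorem exists_lt_sum_mul_sub_logSumExp_of_notMem_stdSimplex [Nonempty ι] {u : ι → ℝ}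
    (hu : u ∉ stdSimplex ℝ ι) (r : ℝ) : ∃ x : ι → ℝ, r < ∑ i, u i * x i - logSumExp x := by
  classical
  by_cases hnonneg : ∀ i, 0 ≤ u i
  · exact exists_lt_sum_mul_sub_logSumExp_of_sum_ne_one (fun hs => hu ⟨hnonneg, hs⟩) r
  · obtain ⟨j, hj⟩ := not_forall.1 hnonneg
    exact exists_lt_sum_mul_sub_logSumExp_of_neg (not_le.1 hj) r

end LogSumExp

end

open LogSumExp in
/-- The convex (Fenchel) conjugate of the log-sum-exp function
`f(x) = log(Σ_i exp(x_i))` on `ℝ^n` (suprema taken in the extended reals):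
on the probability simplex it equals the negative Shannon entropy
`Σ_i u_i·log(u_i)` (with `0·log 0 = 0`, which holds automatically since
`Real.log 0 = 0` in Lean), and everywhere else it is `+∞`. -/
theorem stmt_10 {n : ℕ} (hn : 0 < n) :
    (∀ u : Fin n → ℝ, (∀ i, 0 ≤ u i) → (∑ i, u i) = 1 →
      (⨆ x : Fin n → ℝ,
          (((∑ i, u i * x i) - Real.log (∑ i, Real.exp (x i)) : ℝ) : EReal)) =
        ((∑ i, u i * Real.log (u i) : ℝ) : EReal)) ∧
    (∀ u : Fin n → ℝ, ¬ ((∀ i, 0 ≤ u i) ∧ (∑ i, u i) = 1) →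
      (⨆ x : Fin n → ℝ,
          (((∑ i, u i * x i) - Real.log (∑ i, Real.exp (x i)) : ℝ) : EReal)) =
        (⊤ : EReal)) := by
  have : Nonempty (Fin n) := Fin.pos_iff_nonempty.mp hn
  refine ⟨fun u hu hs => le_antisymm ?_ ?_, fun u hu => iSup_eq_top.2 fun b hb => ?_⟩
  · exact iSup_le fun x => EReal.coe_le_coe_iff.2 (sum_mul_sub_logSumExp_le ⟨hu, hs⟩ x)
  · exact le_of_tendsto' (EReal.tendsto_coe.2
      (tendsto_sum_mul_sub_logSumExp_approxMaximizer ⟨hu, hs⟩)) fun t => le_iSup_of_le _ le_rfl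
  · obtain ⟨r, hbr, -⟩ := EReal.exists_between_coe_real hb
    obtain ⟨x, hx⟩ := exists_lt_sum_mul_sub_logSumExp_of_notMem_stdSimplex hu r
    exact ⟨x, hbr.trans (EReal.coe_lt_coe_iff.2 hx)⟩
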